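/- Let H be a Hilbert space, S a bounded positive self-adjoint operator with spectrum in [A,B], 0 < A, and let g ∈ H be nonzero. Set γ = φ(S)g with φ continuous and positive on [A,B], and let R = (min_{s∈σ(S)} sφ(s)) / (max_{s∈σ(S)} sφ(s)). Then ‖γ/‖γ‖ − S^{-1}g/‖S^{-1}g‖‖ ≤ (1 − R^{1/2})·√(2/(1+R)). -/

import Mathlib

open RCLike ContinuousLinearMap
open scoped InnerProductSpace

/-!
On the spectrum, `R F ≤ s φ(s) ≤ F` gives `(F s⁻¹ - φ s) (φ s - R F s⁻¹) ≥ 0`; by the functional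
calculus this becomes `⟪F v - u, u - R F v⟫ ≥ 0` for `u = φ(S) g` and `v = S⁻¹ g`, i.e.
`‖u‖² + R F² ‖v‖² ≤ (1 + R) F ⟪u, v⟫`. AM-GM on the left turns this into the Kantorovich bound
`cos ∠(u, v) ≥ 2 √R / (1 + R)`, and `‖û - v̂‖² = 2 - 2 cos ∠(u, v)` for the normalized vectors.
-/

theorem mul_inv_sub_mul_sub_mul_inv_nonneg {a b s t : ℝ} (hs : s ≠ 0) (hat : a ≤ s * t)
    (htb : s * t ≤ b) : 0 ≤ (b * s⁻¹ - t) * (t - a * s⁻¹) := by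
  have hfactor : (b * s⁻¹ - t) * (t - a * s⁻¹) = (b - s * t) * (s * t - a) / s ^ 2 := by
    field_simp
  rw [hfactor]
  exact div_nonneg (mul_nonneg (sub_nonneg.mpr htb) (sub_nonneg.mpr hat)) (sq_nonneg s)

section RealInnerProductSpace

variable {E : Type*} [NormedAddCommGroup E] [InnerProductSpace ℝ E]

theorem two_sqrt_mul_norm_mul_norm_le_inner {u v : E} {R F : ℝ} (hR : 0 ≤ R) (hF : 0 < F)
    (h : 0 ≤ ⟪F • v - u, u - (R * F) • v⟫_ℝ) :
    2 * √R * (‖u‖ * ‖v‖) ≤ (1 + R) * ⟪u, v⟫_ℝ := by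
  have hR' : √R ^ 2 = R := Real.sq_sqrt hR
  have hexpand : ⟪F • v - u, u - (R * F) • v⟫_ℝ
      = (1 + R) * F * ⟪u, v⟫_ℝ - (‖u‖ ^ 2 + R * F ^ 2 * ‖v‖ ^ 2) := by
    simp only [inner_sub_left, inner_sub_right, real_inner_smul_left, real_inner_smul_right,
      real_inner_self_eq_norm_sq, real_inner_comm u v]
    ring
  have hamgm : 2 * √R * F * (‖u‖ * ‖v‖) ≤ ‖u‖ ^ 2 + R * F ^ 2 * ‖v‖ ^ 2 := by
    linear_combination sq_nonneg (‖u‖ - √R * F * ‖v‖) + F ^ 2 * ‖v‖ ^ 2 * hR'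
  rw [hexpand] at h
  refine le_of_mul_le_mul_left ?_ hF
  linear_combination h + hamgm

theorem norm_sub_le_of_two_sqrt_le_inner {x y : E} (hx : ‖x‖ = 1) (hy : ‖y‖ = 1) {R : ℝ}
    (hR0 : 0 ≤ R) (hR1 : R ≤ 1) (h : 2 * √R ≤ (1 + R) * ⟪x, y⟫_ℝ) :
    ‖x - y‖ ≤ (1 - √R) * √(2 / (1 + R)) := by
  have hR' : √R ^ 2 = R := Real.sq_sqrt hR0
  have hsqrt_le : √R ≤ 1 := Real.sqrt_le_one.mpr hR1
  refine le_of_pow_le_pow_left₀ two_ne_zero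
    (mul_nonneg (sub_nonneg.mpr hsqrt_le) (Real.sqrt_nonneg _)) ?_
  rw [mul_pow, Real.sq_sqrt (by positivity), norm_sub_sq_real, hx, hy, mul_div_assoc',
    le_div_iff₀ (by positivity)]
  nlinarith

theorem norm_inv_smul_sub_inv_smul_le {u v : E} (hu : u ≠ 0) (hv : v ≠ 0) {R : ℝ}
    (hR0 : 0 ≤ R) (hR1 : R ≤ 1) (h : 2 * √R * (‖u‖ * ‖v‖) ≤ (1 + R) * ⟪u, v⟫_ℝ) :
    ‖‖u‖⁻¹ • u - ‖v‖⁻¹ • v‖ ≤ (1 - √R) * √(2 / (1 + R)) := by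
  have hnu : 0 < ‖u‖ := norm_pos_iff.mpr hu
  have hnv : 0 < ‖v‖ := norm_pos_iff.mpr hv
  have hunit {w : E} (hw : ‖w‖ ≠ 0) : ‖‖w‖⁻¹ • w‖ = 1 := by
    rw [norm_smul, norm_inv, norm_norm, inv_mul_cancel₀ hw]
  refine norm_sub_le_of_two_sqrt_le_inner (hunit hnu.ne') (hunit hnv.ne') hR0 hR1 ?_
  have hnormalize : (1 + R) * ⟪‖u‖⁻¹ • u, ‖v‖⁻¹ • v⟫_ℝ = (1 + R) * ⟪u, v⟫_ℝ / (‖u‖ * ‖v‖) := by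
    rw [real_inner_smul_left, real_inner_smul_right]
    field_simp
  rw [hnormalize, le_div_iff₀ (by positivity)]
  exact h

end RealInnerProductSpace

section FunctionalCalculus

variable {H : Type*} [NormedAddCommGroup H] [InnerProductSpace ℂ H] [CompleteSpace H]
  {S : H →L[ℂ] H}

theorem cfc_apply_ne_zero (hS : IsSelfAdjoint S) {f : ℝ → ℝ}
    (hf : ContinuousOn f (spectrum ℝ S)) (hf0 : ∀ s ∈ spectrum ℝ S, f s ≠ 0) {g : H}
    (hg : g ≠ 0) : cfc f S g ≠ 0 := by
  have hinj := (isUnit_iff_bijective.mp (isUnit_cfc f S hf hS hf0)).injective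
  simpa using hinj.ne hg

theorem re_inner_cfc_apply_nonneg {f₁ f₂ : ℝ → ℝ}
    (hf₁ : ContinuousOn f₁ (spectrum ℝ S)) (hf₂ : ContinuousOn f₂ (spectrum ℝ S))
    (h : ∀ s ∈ spectrum ℝ S, 0 ≤ f₁ s * f₂ s) (g : H) :
    0 ≤ re ⟪cfc f₁ S g, cfc f₂ S g⟫_ℂ := by
  have hpos : (cfc (fun s ↦ f₁ s * f₂ s) S).IsPositive :=
    (nonneg_iff_isPositive _).mp (cfc_nonneg h)
  rw [← (cfc_predicate f₁ S : IsSelfAdjoint (cfc f₁ S)).adjoint_eq, adjoint_inner_left,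
    ← mul_apply_eq_comp, ← cfc_mul f₁ f₂ S hf₁ hf₂]
  exact hpos.re_inner_nonneg_right g

end FunctionalCalculus

theorem stmt1_general {H : Type*} [NormedAddCommGroup H] [InnerProductSpace ℂ H] [CompleteSpace H]
    (S : H →L[ℂ] H) (hS : IsSelfAdjoint S) (A B : ℝ) (hA : 0 < A)
    (hspec : spectrum ℝ S ⊆ Set.Icc A B)
    (g : H) (hg : g ≠ 0)
    (φ : ℝ → ℝ) (hφc : ContinuousOn φ (Set.Icc A B))
    (hφpos : ∀ s ∈ Set.Icc A B, 0 < φ s)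
    (R F : ℝ) (hR : R ∈ Set.Ioc (0:ℝ) 1) (hF : 0 < F)
    (hRspec : ∀ s ∈ spectrum ℝ S, R * F ≤ s * φ s ∧ s * φ s ≤ F) :
    ‖‖(cfc φ S) g‖⁻¹ • (cfc φ S) g -
      ‖(cfc (fun s : ℝ => s⁻¹) S) g‖⁻¹ • (cfc (fun s : ℝ => s⁻¹) S) g‖ ≤
      (1 - R ^ ((1:ℝ)/2)) * Real.sqrt (2 / (1 + R)) := by
  have hpos : ∀ s ∈ spectrum ℝ S, 0 < s := fun s hs ↦ hA.trans_le (hspec hs).1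
  have hφ : ContinuousOn φ (spectrum ℝ S) := hφc.mono hspec
  have hinv : ContinuousOn (fun s : ℝ ↦ s⁻¹) (spectrum ℝ S) :=
    continuousOn_inv₀.mono fun s hs ↦ (hpos s hs).ne'
  have hu := cfc_apply_ne_zero hS hφ (fun s hs ↦ (hφpos s (hspec hs)).ne') hg
  have hv := cfc_apply_ne_zero hS hinv (fun s hs ↦ inv_ne_zero (hpos s hs).ne') hg
  have hinner := re_inner_cfc_apply_nonneg (f₁ := fun s ↦ F * s⁻¹ - φ s)
    (f₂ := fun s ↦ φ s - R * F * s⁻¹) ((continuousOn_const.mul hinv).sub hφ)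
    (hφ.sub (continuousOn_const.mul hinv))
    (fun s hs ↦ mul_inv_sub_mul_sub_mul_inv_nonneg (hpos s hs).ne' (hRspec s hs).1
      (hRspec s hs).2) g
  rw [cfc_sub (fun s ↦ F * s⁻¹) φ S (continuousOn_const.mul hinv) hφ,
    cfc_sub φ (fun s ↦ R * F * s⁻¹) S hφ (continuousOn_const.mul hinv),
    cfc_const_mul F (fun s ↦ s⁻¹) S hinv, cfc_const_mul (R * F) (fun s ↦ s⁻¹) S hinv,
    sub_apply, sub_apply, smul_apply, smul_apply] at hinner
  -- `H` as a real inner product space, with `⟪x, y⟫_ℝ = re ⟪x, y⟫_ℂ`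
  let _ := InnerProductSpace.complexToReal (G := H)
  rw [← Real.sqrt_eq_rpow]
  exact norm_inv_smul_sub_inv_smul_le hu hv hR.1.le hR.2
    (two_sqrt_mul_norm_mul_norm_le_inner hR.1.le hF hinner)

/-- Kantorovich-type error bound for approximating the canonical dual window
`g^d = S^{-1} g` by `γ = φ(S) g`. -/
theorem stmt1 {H : Type*} [NormedAddCommGroup H] [InnerProductSpace ℂ H] [CompleteSpace H]
    (S : H →L[ℂ] H) (hS : IsSelfAdjoint S) (A B : ℝ) (hA : 0 < A) (hAB : A ≤ B)
    (hspec : spectrum ℝ S ⊆ Set.Icc A B)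
    (g : H) (hg : g ≠ 0)
    (φ : ℝ → ℝ) (hφc : ContinuousOn φ (Set.Icc A B))
    (hφpos : ∀ s ∈ Set.Icc A B, 0 < φ s)
    (R F : ℝ) (hR : R ∈ Set.Ioc (0:ℝ) 1) (hF : 0 < F)
    (hRspec : ∀ s ∈ spectrum ℝ S, R * F ≤ s * φ s ∧ s * φ s ≤ F) :
    ‖‖(cfc φ S) g‖⁻¹ • (cfc φ S) g -
      ‖(cfc (fun s : ℝ => s⁻¹) S) g‖⁻¹ • (cfc (fun s : ℝ => s⁻¹) S) g‖ ≤
      (1 - R ^ ((1:ℝ)/2)) * Real.sqrt (2 / (1 + R)) :=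
  stmt1_general S hS A B hA hspec g hg φ hφc hφpos R F hR hF hRspec
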